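/- For a real Dirichlet character χ with λ = χ ∗ 1 and Λ the von Mangoldt function, for every n ≥ 1 we have Λ(n) ≤ (λ ∗ Λ ∗ λ)(n), where the right side is the triple Dirichlet convolution evaluated at n. -/

import Mathlib

/-! `λ = 1 ∗ χ` is multiplicative, and at a prime power `p ^ k` it is the geometric sum
`∑_{i ≤ k} χ(p)^i` with `χ(p) ∈ [-1, 1]`, hence `λ ≥ 0`. The right-hand side is therefore a sum
of nonnegative terms, and its term with `a = d = 1`, `c = n` is `Λ(n)`. -/

open ArithmeticFunction Finset
open scoped ArithmeticFunction.zeta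

lemma geom_sum_nonneg_of_neg_one_le {R : Type*} [Ring R] [LinearOrder R] [IsStrictOrderedRing R]
    {x : R} (hx : -1 ≤ x) (n : ℕ) : 0 ≤ ∑ i ∈ range n, x ^ i := by
  rcases eq_or_ne n 0 with rfl | hn
  · simp
  · exact le_of_not_gt fun h ↦ ((geom_sum_neg_iff hn).mp h).2.not_ge (neg_le_iff_add_nonneg.mp hx)

namespace DirichletCharacter

variable {D : ℕ} (χ : DirichletCharacter ℝ D)

lemma neg_one_le_apply (a : ZMod D) : -1 ≤ χ a :=
  neg_le_of_abs_le (by simpa only [Real.norm_eq_abs] using χ.norm_le_one a)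

lemma zeta_mul_toArithmeticFunction_apply (m : ℕ) :
    (ζ * toArithmeticFunction (χ ·) : ArithmeticFunction ℝ) m = ∑ h ∈ m.divisors, χ h := by
  rw [coe_zeta_mul_apply]
  refine sum_congr rfl fun h hh ↦ ?_
  simp [toArithmeticFunction, (Nat.pos_of_mem_divisors hh).ne']

lemma sum_divisors_prime_pow_nonneg {p : ℕ} (hp : p.Prime) (k : ℕ) :
    0 ≤ ∑ h ∈ (p ^ k).divisors, χ h := by
  simp only [Nat.sum_divisors_prime_pow hp, Nat.cast_pow, map_pow]
  exact geom_sum_nonneg_of_neg_one_le (χ.neg_one_le_apply p) _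

lemma sum_divisors_nonneg (m : ℕ) : 0 ≤ ∑ h ∈ m.divisors, χ h := by
  rcases eq_or_ne m 0 with rfl | hm
  · simp
  have hmul : (ζ * toArithmeticFunction (χ ·) : ArithmeticFunction ℝ).IsMultiplicative :=
    isMultiplicative_zeta.natCast.mul χ.isMultiplicative_toArithmeticFunction
  rw [← zeta_mul_toArithmeticFunction_apply, hmul.multiplicative_factorization _ hm]
  refine prod_nonneg fun p hp ↦ ?_
  dsimp only
  rw [zeta_mul_toArithmeticFunction_apply]
  exact χ.sum_divisors_prime_pow_nonneg (Nat.prime_of_mem_primeFactors hp) _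

end DirichletCharacter

open ArithmeticFunction in
theorem vonMangoldt_le_triple_conv_general (D : ℕ) (χ : DirichletCharacter ℝ D)
    (n : ℕ) :
    (Λ n : ℝ) ≤
      ∑ ab ∈ n.divisorsAntidiagonal,
        (∑ h ∈ ab.1.divisors, χ h) *
          (∑ cd ∈ ab.2.divisorsAntidiagonal, (Λ cd.1 : ℝ) * ∑ h ∈ cd.2.divisors, χ h) := by
  rcases eq_or_ne n 0 with rfl | hn
  · simp
  have hsummand_nonneg (cd : ℕ × ℕ) : 0 ≤ (Λ cd.1 : ℝ) * ∑ h ∈ cd.2.divisors, χ h :=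
    mul_nonneg vonMangoldt_nonneg (χ.sum_divisors_nonneg _)
  have hmem {a b : ℕ} (hab : a * b = n) : (a, b) ∈ n.divisorsAntidiagonal := by simp [hab, hn]
  refine le_trans ?_ (single_le_sum (fun ab _ ↦ ?_) (hmem (one_mul n)))
  · refine le_trans ?_ (mul_le_mul_of_nonneg_left
      (single_le_sum (fun cd _ ↦ hsummand_nonneg cd) (hmem (mul_one n))) (χ.sum_divisors_nonneg 1))
    simp
  · exact mul_nonneg (χ.sum_divisors_nonneg _) (sum_nonneg fun cd _ ↦ hsummand_nonneg cd)

open ArithmeticFunction in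
/-- For a real Dirichlet character `χ` and `λ = χ ∗ 1`, for every `n ≥ 1`,
`Λ(n) ≤ (λ ∗ Λ ∗ λ)(n)`. -/
theorem vonMangoldt_le_triple_conv (D : ℕ) (χ : DirichletCharacter ℝ D)
    (hχ : ∀ m : ZMod D, χ m = 0 ∨ χ m = 1 ∨ χ m = -1)
    (n : ℕ) (hn : 1 ≤ n) :
    (Λ n : ℝ) ≤
      ∑ ab ∈ n.divisorsAntidiagonal,
        (∑ h ∈ ab.1.divisors, χ h) *
          (∑ cd ∈ ab.2.divisorsAntidiagonal, (Λ cd.1 : ℝ) * ∑ h ∈ cd.2.divisors, χ h) :=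
  vonMangoldt_le_triple_conv_general D χ n
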